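/- Let a ∈ ℝ^n. The function g(x) = a₁x₁ ⊻⁻ ⋯ ⊻⁻ aₙxₙ on ℝ^n is lower semi-continuous, and it is the largest lower semi-continuous function that is pointwise ≤ the function x ↦ ⊞_{i∈[n]} a_i x_i (i.e., g is the lower semi-continuous regularization of the B-form ⟨a,·⟩_∞). -/

import Mathlib

/-!
Write `y = a * x` and `‖y‖ = maxᵢ |yᵢ|`. Folding with `smm` keeps an entry of maximal absolute
value and prefers the negative one on ties, so `lformM a x = -‖y‖` if some `yᵢ = -‖y‖` and
`lformM a x = ‖y‖` otherwise. Off the closed set where some `yᵢ = -‖y‖` this is the continuous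
`‖y‖`, and on it it equals the continuous lower bound `-‖y‖`: hence lower semicontinuity.
`FF` returns an entry or `0`, so `|FF| ≤ ‖y‖`, and if no entry equals `-‖y‖` the value `‖y‖` has
positive signed count, so `FF = ‖y‖`. For maximality, at a point with `yᵢ = -‖y‖ < 0` push `yᵢ`
slightly further down: it becomes the strictly dominant entry, so there `FF < -‖y‖`, and the lower
semicontinuity of `h` carries the bound back to the point.
-/

open scoped Classical

/-- lower regularized idempotent addition -/
noncomputable def smm (u v : ℝ) : ℝ :=
  if |v| < |u| then u else if |u| < |v| then v else min u v

/-- upper regularized idempotent addition -/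
noncomputable def smp (u v : ℝ) : ℝ :=
  if |v| < |u| then u else if |u| < |v| then v else max u v

/-- limit idempotent addition ⊞ -/
noncomputable def bp (u v : ℝ) : ℝ :=
  if |v| < |u| then u else if |u| < |v| then v else (u + v) / 2

/-- ξ_I[x](α): signed count of occurrences of α among the x i, i ∈ I. -/
noncomputable def xiF {ι : Type*} (I : Finset ι) (x : ι → ℝ) (α : ℝ) : ℤ :=
  ((I.filter fun i => x i = α).card : ℤ) - ((I.filter fun i => x i = -α).card : ℤ)

/-- the n-ary limit operation F_I, i.e. ⊞_{i∈I} x_i. -/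
noncomputable def FF {ι : Type*} (I : Finset ι) (x : ι → ℝ) : ℝ :=
  if h : (I.filter fun j => xiF I x (x j) ≠ 0).Nonempty then
    if 0 < xiF I x ((I.filter fun j => xiF I x (x j) ≠ 0).sup' h fun i => |x i|) then
      (I.filter fun j => xiF I x (x j) ≠ 0).sup' h x
    else if xiF I x ((I.filter fun j => xiF I x (x j) ≠ 0).sup' h fun i => |x i|) < 0 then
      (I.filter fun j => xiF I x (x j) ≠ 0).inf' h x
    else 0
  else 0

/-- lower B-form: a₁x₁ ⊻⁻ ⋯ ⊻⁻ aₙxₙ -/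
noncomputable def lformM {n : ℕ} (a x : Fin n → ℝ) : ℝ :=
  (List.ofFn fun i => a i * x i).foldr smm 0

open Filter Topology

lemma smm_eq_left {u v : ℝ} (h : |v| < |u|) : smm u v = u := if_pos h

lemma smm_eq_right {u v : ℝ} (h : |u| < |v|) : smm u v = v := by
  rw [smm, if_neg h.le.not_gt, if_pos h]

lemma smm_eq_min {u v : ℝ} (h : |u| = |v|) : smm u v = min u v := by
  rw [smm, if_neg h.ge.not_gt, if_neg h.le.not_gt]

lemma smm_eq_or (u v : ℝ) : smm u v = u ∨ smm u v = v := by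
  rcases lt_trichotomy |u| |v| with h | h | h
  · exact .inr (smm_eq_right h)
  · exact smm_eq_min h ▸ min_choice u v
  · exact .inl (smm_eq_left h)

lemma abs_smm (u v : ℝ) : |smm u v| = max |u| |v| := by
  rcases lt_trichotomy |u| |v| with h | h | h
  · rw [smm_eq_right h, max_eq_right h.le]
  · rcases smm_eq_or u v with h' | h' <;> simp [h', h]
  · rw [smm_eq_left h, max_eq_left h.le]

lemma smm_eq_left_of_nonpos {u v : ℝ} (hu : u ≤ 0) (h : |v| ≤ |u|) : smm u v = u := by
  rcases h.lt_or_eq with h | h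
  · exact smm_eq_left h
  · rw [smm_eq_min h.symm, min_eq_left]
    linarith [neg_abs_le v, abs_of_nonpos hu]

lemma smm_eq_right_of_nonpos {u v : ℝ} (hv : v ≤ 0) (h : |u| ≤ |v|) : smm u v = v := by
  rcases h.lt_or_eq with h | h
  · exact smm_eq_right h
  · rw [smm_eq_min h, min_eq_right]
    linarith [neg_abs_le u, abs_of_nonpos hv]

namespace List

lemma foldr_smm_eq_zero_or_mem (l : List ℝ) : l.foldr smm 0 = 0 ∨ l.foldr smm 0 ∈ l := by
  induction l with
  | nil => exact .inl rfl
  | cons u t ih =>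
    rw [foldr_cons]
    rcases smm_eq_or u (t.foldr smm 0) with h | h <;> rw [h]
    · exact .inr mem_cons_self
    · exact ih.imp_right (mem_cons_of_mem u)

lemma abs_le_abs_foldr_smm {l : List ℝ} {u : ℝ} (hu : u ∈ l) : |u| ≤ |l.foldr smm 0| := by
  induction l with
  | nil => simp at hu
  | cons v t ih =>
    rw [foldr_cons, abs_smm]
    rcases mem_cons.1 hu with rfl | hu
    · exact le_max_left _ _
    · exact (ih hu).trans (le_max_right _ _)

lemma foldr_smm_eq_neg_abs {l : List ℝ} (h : -|l.foldr smm 0| ∈ l) :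
    l.foldr smm 0 = -|l.foldr smm 0| := by
  induction l with
  | nil => simp at h
  | cons u t ih =>
    have hle : ∀ v ∈ t, |v| ≤ |t.foldr smm 0| := fun v hv => abs_le_abs_foldr_smm hv
    rw [foldr_cons, abs_smm] at h ⊢
    generalize t.foldr smm 0 = s at ih hle h ⊢
    obtain ⟨M, hM, hMs⟩ : ∃ M, M = max |u| |s| ∧ |s| ≤ M := ⟨_, rfl, le_max_right _ _⟩
    have hM0 : 0 ≤ M := hM ▸ le_max_of_le_left (abs_nonneg u)
    rw [← hM] at h ⊢
    rcases mem_cons.1 h with hu | ht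
    · have hu' : |u| = M := by rw [← hu, abs_neg, abs_of_nonneg hM0]
      rw [smm_eq_left_of_nonpos (hu ▸ neg_nonpos.2 hM0) (hu' ▸ hMs), hu]
    · have hs : M = |s| := le_antisymm (by simpa [abs_of_nonneg hM0] using hle _ ht) hMs
      rw [hs] at ht ⊢
      have hs' : s = -|s| := ih ht
      have hus : |u| ≤ |s| := hs ▸ hM ▸ le_max_left _ _
      rw [smm_eq_right_of_nonpos (hs' ▸ neg_nonpos.2 (abs_nonneg s)) hus]
      exact hs'

end List

noncomputable def smmOfFn {n : ℕ} (y : Fin n → ℝ) : ℝ := (List.ofFn y).foldr smm 0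

lemma lformM_eq_smmOfFn {n : ℕ} (a x : Fin n → ℝ) : lformM a x = smmOfFn (a * x) := rfl

section smmOfFn

variable {n : ℕ} (y : Fin n → ℝ)

lemma smmOfFn_eq_zero_or_exists : smmOfFn y = 0 ∨ ∃ i, y i = smmOfFn y :=
  (List.foldr_smm_eq_zero_or_mem _).imp_right List.mem_ofFn.1

lemma abs_smmOfFn : |smmOfFn y| = ‖y‖ := by
  refine le_antisymm ?_ ((pi_norm_le_iff_of_nonneg (abs_nonneg _)).2 fun i =>
    List.abs_le_abs_foldr_smm (List.mem_ofFn.2 ⟨i, rfl⟩))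
  rcases smmOfFn_eq_zero_or_exists y with h | ⟨i, hi⟩
  · simp [h]
  · exact hi ▸ norm_le_pi_norm y i

variable {y}

lemma smmOfFn_eq_neg_norm (h : ∃ i, y i = -‖y‖) : smmOfFn y = -‖y‖ := by
  rw [← abs_smmOfFn] at h ⊢
  exact List.foldr_smm_eq_neg_abs (List.mem_ofFn.2 h)

lemma smmOfFn_eq_norm (h : ∀ i, y i ≠ -‖y‖) : smmOfFn y = ‖y‖ := by
  rcases smmOfFn_eq_zero_or_exists y with h0 | ⟨i, hi⟩
  · simpa [h0, eq_comm] using abs_smmOfFn y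
  · rcases (abs_eq (norm_nonneg y)).1 (abs_smmOfFn y) with h' | h'
    · exact h'
    · exact absurd (hi.trans h') (h i)

end smmOfFn

lemma neg_norm_le_smmOfFn {n : ℕ} (y : Fin n → ℝ) : -‖y‖ ≤ smmOfFn y :=
  abs_smmOfFn y ▸ neg_abs_le _

lemma lowerSemicontinuous_smmOfFn {n : ℕ} : LowerSemicontinuous (smmOfFn (n := n)) := by
  intro y z hz
  by_cases hneg : ∃ i, y i = -‖y‖
  · rw [smmOfFn_eq_neg_norm hneg] at hz
    filter_upwards [(continuous_norm.tendsto y).neg.eventually_const_lt hz] with y' hy'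
    exact hy'.trans_le (neg_norm_le_smmOfFn y')
  · push Not at hneg
    have hopen : IsOpen {y' : Fin n → ℝ | ∀ i, -‖y'‖ < y' i} := by
      simp only [Set.ofPred_forall]
      exact isOpen_iInter_of_finite fun i => isOpen_lt (by fun_prop) (by fun_prop)
    have hy : ∀ i, -‖y‖ < y i := fun i =>
      (abs_le.1 (norm_le_pi_norm y i)).1.lt_of_ne (hneg i).symm
    rw [smmOfFn_eq_norm hneg] at hz
    filter_upwards [hopen.mem_nhds hy, (continuous_norm.tendsto y).eventually_const_lt hz]
      with y' hy' hz'
    rwa [smmOfFn_eq_norm fun i => (hy' i).ne']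

section FF

variable {ι : Type*} {I : Finset ι} {y : ι → ℝ}

lemma xiF_neg (I : Finset ι) (y : ι → ℝ) (α : ℝ) : xiF I y (-α) = -xiF I y α := by
  simp only [xiF, neg_neg, neg_sub]

lemma xiF_pos_of_mem {i : ι} {α : ℝ} (hi : i ∈ I) (hyi : y i = α) (hno : ∀ j ∈ I, y j ≠ -α) :
    0 < xiF I y α := by
  rw [xiF, Finset.filter_false_of_mem hno, Finset.card_empty, Nat.cast_zero, sub_zero,
    Nat.cast_pos]
  exact Finset.card_pos.2 ⟨i, Finset.mem_filter.2 ⟨hi, hyi⟩⟩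

lemma exists_eq_of_xiF_pos {α : ℝ} (h : 0 < xiF I y α) : ∃ i ∈ I, y i = α := by
  by_contra! hno
  have : xiF I y α ≤ 0 := by
    rw [xiF, Finset.filter_false_of_mem hno]
    simp
  exact this.not_gt h

lemma FF_eq_zero_or_exists (I : Finset ι) (y : ι → ℝ) : FF I y = 0 ∨ ∃ i ∈ I, FF I y = y i := by
  unfold FF
  split_ifs with h
  · obtain ⟨i, hi, he⟩ := Finset.exists_mem_eq_sup' h y
    exact .inr ⟨i, (Finset.mem_filter.1 hi).1, he⟩
  · obtain ⟨i, hi, he⟩ := Finset.exists_mem_eq_inf' h y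
    exact .inr ⟨i, (Finset.mem_filter.1 hi).1, he⟩
  all_goals exact .inl rfl

lemma abs_FF_le {m : ℝ} (hm : 0 ≤ m) (hle : ∀ j ∈ I, |y j| ≤ m) : |FF I y| ≤ m := by
  rcases FF_eq_zero_or_exists I y with h | ⟨i, hi, h⟩ <;> rw [h]
  · simpa using hm
  · exact hle i hi

lemma sup'_abs_eq {s : Finset ι} {m : ℝ} {i : ι} (hi : i ∈ s) (hle : ∀ j ∈ s, |y j| ≤ m)
    (hyi : |y i| = m) : s.sup' ⟨i, hi⟩ (fun j => |y j|) = m :=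
  le_antisymm (Finset.sup'_le _ _ hle) (hyi ▸ Finset.le_sup' (fun j => |y j|) hi)

lemma FF_eq_of_xiF_pos {m : ℝ} (hle : ∀ j ∈ I, |y j| ≤ m) (hξ : 0 < xiF I y m) : FF I y = m := by
  obtain ⟨i, hi, hyi⟩ := exists_eq_of_xiF_pos hξ
  have hm : 0 ≤ m := (abs_nonneg _).trans (hyi ▸ hle i hi)
  have hiJ : i ∈ I.filter fun j => xiF I y (y j) ≠ 0 :=
    Finset.mem_filter.2 ⟨hi, by rw [hyi]; exact hξ.ne'⟩
  have hsup := sup'_abs_eq hiJ (fun j hj => hle j (Finset.filter_subset _ _ hj))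
    (by rw [hyi, abs_of_nonneg hm])
  rw [FF, dif_pos ⟨i, hiJ⟩, hsup, if_pos hξ]
  exact le_antisymm
    (Finset.sup'_le _ _ fun j hj => (le_abs_self _).trans (hle j (Finset.mem_filter.1 hj).1))
    (hyi ▸ Finset.le_sup' y hiJ)

lemma FF_eq_neg_of_xiF_neg {m : ℝ} (hle : ∀ j ∈ I, |y j| ≤ m) (hξ : xiF I y m < 0) :
    FF I y = -m := by
  have hξ' : 0 < xiF I y (-m) := by rw [xiF_neg]; exact neg_pos.2 hξ
  obtain ⟨i, hi, hyi⟩ := exists_eq_of_xiF_pos hξ'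
  have hm : 0 ≤ m := (abs_nonneg _).trans (hyi ▸ hle i hi)
  have hiJ : i ∈ I.filter fun j => xiF I y (y j) ≠ 0 :=
    Finset.mem_filter.2 ⟨hi, by rw [hyi]; exact hξ'.ne'⟩
  have hsup := sup'_abs_eq hiJ (fun j hj => hle j (Finset.filter_subset _ _ hj))
    (by rw [hyi, abs_neg, abs_of_nonneg hm])
  rw [FF, dif_pos ⟨i, hiJ⟩, hsup, if_neg hξ.not_gt, if_pos hξ]
  exact le_antisymm (hyi ▸ Finset.inf'_le y hiJ)
    (Finset.le_inf' _ _ fun j hj => neg_le_of_abs_le (hle j (Finset.mem_filter.1 hj).1))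

lemma FF_eq_of_abs_lt {i : ι} (hi : i ∈ I) (h0 : y i ≠ 0)
    (hdom : ∀ j ∈ I, j ≠ i → |y j| < |y i|) : FF I y = y i := by
  have hle : ∀ j ∈ I, |y j| ≤ |y i| := fun j hj =>
    if hji : j = i then hji ▸ le_rfl else (hdom j hj hji).le
  have hno : ∀ j ∈ I, y j ≠ -y i := by
    intro j hj hji
    by_cases hj' : j = i
    · subst hj'; exact h0 (by linarith)
    · exact (hdom j hj hj').ne (by rw [hji, abs_neg])
  have hξ : 0 < xiF I y (y i) := xiF_pos_of_mem hi rfl hno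
  rcases h0.lt_or_gt with hneg | hpos
  · rw [FF_eq_neg_of_xiF_neg hle (by rw [abs_of_neg hneg, xiF_neg]; exact neg_neg_of_pos hξ),
      abs_of_neg hneg, neg_neg]
  · rw [FF_eq_of_xiF_pos hle (by rwa [abs_of_pos hpos]), abs_of_pos hpos]

end FF

lemma FF_sub_single_of_eq_neg_norm {ι : Type*} [Fintype ι] [DecidableEq ι] {y : ι → ℝ} {i : ι}
    (hi : y i = -‖y‖) {t : ℝ} (ht : 0 < t) :
    FF Finset.univ (y - Pi.single i t) = -‖y‖ - t := by
  have hyi : (y - Pi.single i t : ι → ℝ) i = -‖y‖ - t := by simp [hi]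
  rw [← hyi]
  refine FF_eq_of_abs_lt (Finset.mem_univ i) (by rw [hyi]; linarith [norm_nonneg y])
    fun j _ hji => ?_
  have hyj : |y j| ≤ ‖y‖ := norm_le_pi_norm y j
  rw [hyi, Pi.sub_apply, Pi.single_eq_of_ne hji, sub_zero,
    abs_of_neg (show -‖y‖ - t < 0 by linarith [norm_nonneg y])]
  linarith

lemma LowerSemicontinuousAt.le_of_tendsto {α β γ : Type*} [TopologicalSpace α] [LinearOrder β]
    {f : α → β} {x : α} (hf : LowerSemicontinuousAt f x) {l : Filter γ} [l.NeBot] {p : γ → α}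
    (hp : Tendsto p l (𝓝 x)) {c : β} (hc : ∀ᶠ t in l, f (p t) ≤ c) : f x ≤ c := by
  by_contra! h
  obtain ⟨t, hlt, hle⟩ := ((hp.eventually (hf c h)).and hc).exists
  exact hle.not_gt hlt

lemma smmOfFn_le_FF {n : ℕ} (y : Fin n → ℝ) : smmOfFn y ≤ FF Finset.univ y := by
  have hFF : -‖y‖ ≤ FF Finset.univ y :=
    neg_le_of_abs_le (abs_FF_le (norm_nonneg y) fun j _ => norm_le_pi_norm y j)
  by_cases hneg : ∃ i, y i = -‖y‖
  · rwa [smmOfFn_eq_neg_norm hneg]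
  push Not at hneg
  rw [smmOfFn_eq_norm hneg]
  rcases smmOfFn_eq_zero_or_exists y with h0 | ⟨i, hi⟩
  · have : ‖y‖ = 0 := by rw [← abs_smmOfFn, h0, abs_zero]
    linarith
  · rw [smmOfFn_eq_norm hneg] at hi
    exact (FF_eq_of_xiF_pos (fun j _ => norm_le_pi_norm y j)
      (xiF_pos_of_mem (Finset.mem_univ i) hi fun j _ => hneg j)).ge

lemma le_lformM_of_lowerSemicontinuous {n : ℕ} {a : Fin n → ℝ} {h : (Fin n → ℝ) → ℝ}
    (hh : LowerSemicontinuous h) (hle : ∀ x, h x ≤ FF Finset.univ (a * x)) (x : Fin n → ℝ) :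
    h x ≤ lformM a x := by
  rw [lformM_eq_smmOfFn]
  have hFF : FF Finset.univ (a * x) ≤ ‖a * x‖ :=
    le_of_abs_le (abs_FF_le (norm_nonneg _) fun j _ => norm_le_pi_norm (a * x) j)
  by_cases hneg : ∃ i, (a * x) i = -‖a * x‖
  swap
  · push Not at hneg
    rw [smmOfFn_eq_norm hneg]
    exact (hle x).trans hFF
  rw [smmOfFn_eq_neg_norm hneg]
  obtain ⟨i, hi⟩ := hneg
  rcases (norm_nonneg (a * x)).eq_or_lt with h0 | hpos
  · rw [← h0, neg_zero]
    exact (hle x).trans (h0 ▸ hFF)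
  have ha : a i ≠ 0 := fun ha => by rw [Pi.mul_apply, ha, zero_mul] at hi; linarith
  have hp : Tendsto (fun t => x - Pi.single i (t / a i)) (𝓝[>] 0) (𝓝 x) := by
    have hc : Continuous fun t : ℝ => x - Pi.single i (t / a i) :=
      continuous_const.sub ((continuous_single i).comp (continuous_id.div_const _))
    exact (hc.tendsto' 0 x (by simp)).mono_left nhdsWithin_le_nhds
  refine LowerSemicontinuousAt.le_of_tendsto (hh x) hp ?_
  filter_upwards [self_mem_nhdsWithin] with t (ht : 0 < t)
  have hmul : a * (x - Pi.single i (t / a i)) = a * x - Pi.single i t := by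
    rw [mul_sub, ← Pi.single_mul_right, mul_div_cancel₀ _ ha]
  have := hle (x - Pi.single i (t / a i))
  rw [hmul, FF_sub_single_of_eq_neg_norm hi ht] at this
  linarith

theorem stmt_17 {n : ℕ} (a : Fin n → ℝ) :
    LowerSemicontinuous (fun x : Fin n → ℝ => lformM a x) ∧
    (∀ x : Fin n → ℝ, lformM a x ≤ FF Finset.univ (fun i => a i * x i)) ∧
    (∀ h : (Fin n → ℝ) → ℝ, LowerSemicontinuous h →
      (∀ x, h x ≤ FF Finset.univ (fun i => a i * x i)) →
      ∀ x, h x ≤ lformM a x) :=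
  ⟨lowerSemicontinuous_smmOfFn.comp (continuous_const.mul continuous_id),
    fun x => smmOfFn_le_FF (a * x),
    fun _ hh hle => le_lformM_of_lowerSemicontinuous hh hle⟩
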